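/- arXiv:1611.08415 — 3 statements merged into one kernel-verified Lean document; each statement's English description precedes it below -/
import Mathlib

section
/- For every natural number n ≥ 1, every cyclic subgroup of SO(3) of order n is conjugate in SO(3) to the standard cyclic subgroup C_n; that is, there is exactly one conjugacy class of cyclic subgroups of order n in SO(3). -/
noncomputable section

/-- `SO(3)`: the special orthogonal group of `3 × 3` real matrices. -/
abbrev SO3 := Matrix.specialOrthogonalGroup (Fin 3) ℝ

noncomputable instance : Group SO3 :=
  { (inferInstance : Monoid SO3) with
    inv := fun A => ⟨star A.1, by
      rw [Matrix.mem_specialOrthogonalGroup_iff]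
      refine ⟨Unitary.star_mem A.2.1, ?_⟩
      have h : (A.1).det = 1 := A.2.2
      rw [Matrix.star_eq_conjTranspose, Matrix.det_conjTranspose, h, star_one]⟩
    inv_mul_cancel := fun A => Subtype.ext A.2.1.1 }

open Real in
/-- The matrix of the rotation by `θ` about the z-axis. -/
def RzMat (θ : ℝ) : Matrix (Fin 3) (Fin 3) ℝ :=
  !![cos θ, -sin θ, 0;
     sin θ,  cos θ, 0;
     0, 0, 1]

lemma RzMat_mem (θ : ℝ) : RzMat θ ∈ Matrix.specialOrthogonalGroup (Fin 3) ℝ := by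
  rw [Matrix.mem_specialOrthogonalGroup_iff]
  constructor
  · rw [Matrix.mem_orthogonalGroup_iff]
    ext i j
    fin_cases i <;> fin_cases j <;>
      simp [RzMat, Matrix.mul_apply, Fin.sum_univ_succ, Matrix.star_eq_conjTranspose,
        Matrix.conjTranspose_apply, Matrix.vecHead, Matrix.vecTail] <;>
      nlinarith [Real.sin_sq_add_cos_sq θ]
  · simp [RzMat, Matrix.det_fin_three]
    nlinarith [Real.sin_sq_add_cos_sq θ]

/-- The rotation by `θ` about the z-axis, as an element of SO(3). -/
def Rz (θ : ℝ) : SO3 := ⟨RzMat θ, RzMat_mem θ⟩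

/-- The matrix `diag (1, -1, -1)`. -/
def rhoMat : Matrix (Fin 3) (Fin 3) ℝ := !![1,0,0; 0,-1,0; 0,0,-1]

lemma rhoMat_mem : rhoMat ∈ Matrix.specialOrthogonalGroup (Fin 3) ℝ := by
  rw [Matrix.mem_specialOrthogonalGroup_iff]
  constructor
  · rw [Matrix.mem_orthogonalGroup_iff]
    ext i j
    fin_cases i <;> fin_cases j <;>
      simp [rhoMat, Matrix.mul_apply, Fin.sum_univ_succ, Matrix.star_eq_conjTranspose,
        Matrix.conjTranspose_apply, Matrix.vecHead, Matrix.vecTail]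
  · simp [rhoMat, Matrix.det_fin_three]

/-- `ρ = diag (1, -1, -1)`, the rotation by `π` about the x-axis, as an element of SO(3). -/
def ρ : SO3 := ⟨rhoMat, rhoMat_mem⟩

lemma Rz_add (a b : ℝ) : Rz a * Rz b = Rz (a + b) := by
  apply Subtype.ext
  show RzMat a * RzMat b = RzMat (a + b)
  ext i j
  fin_cases i <;> fin_cases j <;>
    simp [RzMat, Matrix.mul_apply, Fin.sum_univ_succ, Matrix.vecHead, Matrix.vecTail,
      Real.cos_add, Real.sin_add] <;> ring

lemma Rz_zero : Rz 0 = 1 := by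
  apply Subtype.ext
  show RzMat 0 = 1
  ext i j
  fin_cases i <;> fin_cases j <;>
    simp [RzMat, Matrix.one_apply, Matrix.vecHead, Matrix.vecTail]

lemma rho_sq : ρ * ρ = 1 := by
  apply Subtype.ext
  show rhoMat * rhoMat = 1
  ext i j
  fin_cases i <;> fin_cases j <;>
    simp [rhoMat, Matrix.mul_apply, Fin.sum_univ_succ, Matrix.one_apply,
      Matrix.vecHead, Matrix.vecTail]

lemma Rz_rho (θ : ℝ) : Rz θ * ρ = ρ * Rz (-θ) := by
  apply Subtype.ext
  show RzMat θ * rhoMat = rhoMat * RzMat (-θ)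
  ext i j
  fin_cases i <;> fin_cases j <;>
    simp [RzMat, rhoMat, Matrix.mul_apply, Fin.sum_univ_succ,
      Matrix.vecHead, Matrix.vecTail]

lemma Rz_inv (θ : ℝ) : (Rz θ)⁻¹ = Rz (-θ) := by
  symm
  rw [eq_inv_iff_mul_eq_one, Rz_add]
  simpa using Rz_zero

lemma rho_inv : ρ⁻¹ = ρ := inv_eq_of_mul_eq_one_right rho_sq
/-- The standard cyclic subgroup `C_n ⊆ SO(3)` of order `n`, generated by `Rz (2π/n)`. -/
def Cn (n : ℕ) : Subgroup SO3 := Subgroup.closure {Rz (2 * Real.pi / n)}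

/-! ### Auxiliary lemmas -/

open Real Matrix

lemma Rz_pow (θ : ℝ) (k : ℕ) : Rz θ ^ k = Rz (k * θ) := by
  induction k with
  | zero => simpa using Rz_zero.symm
  | succ m ih =>
    rw [pow_succ, ih, Rz_add]
    push_cast
    ring_nf

lemma Rz_zpow (θ : ℝ) (k : ℤ) : Rz θ ^ k = Rz (k * θ) := by
  cases k with
  | ofNat m => rw [Int.ofNat_eq_coe, zpow_natCast, Rz_pow]; norm_num
  | negSucc m =>
    rw [zpow_negSucc, Rz_pow, Rz_inv]
    congr 1
    push_cast
    ring

lemma Rz_eq_one_iff (θ : ℝ) : Rz θ = 1 ↔ ∃ k : ℤ, θ = k * (2 * π) := by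
  constructor
  · intro h
    have h00 : RzMat θ 0 0 = (1 : Matrix (Fin 3) (Fin 3) ℝ) 0 0 :=
      congrFun (congrFun (congrArg Subtype.val h) 0) 0
    simp [RzMat, Matrix.one_apply] at h00
    obtain ⟨k, hk⟩ := (Real.cos_eq_one_iff θ).mp h00
    exact ⟨k, hk.symm⟩
  · rintro ⟨k, rfl⟩
    have hs : Real.sin ((k : ℝ) * (2 * π)) = 0 := by
      have := Real.sin_int_mul_two_pi_sub 0 k
      simpa using this
    apply Subtype.ext
    show RzMat _ = 1
    ext i j
    fin_cases i <;> fin_cases j <;>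
      simp [RzMat, Matrix.one_apply, Real.cos_int_mul_two_pi, hs, Matrix.vecHead, Matrix.vecTail]

lemma orderOf_Rz (n : ℕ) (hn : 1 ≤ n) : orderOf (Rz (2 * π / n)) = n := by
  have hn0 : (n : ℝ) ≠ 0 := Nat.cast_ne_zero.mpr (by omega)
  rw [orderOf_eq_iff (by omega)]
  constructor
  · rw [Rz_pow, Rz_eq_one_iff]
    exact ⟨1, by field_simp; norm_num⟩
  · intro m hmn hm0 hcon
    rw [Rz_pow, Rz_eq_one_iff] at hcon
    obtain ⟨k, hk⟩ := hcon
    have hpi : (0:ℝ) < 2 * π := by positivity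
    have : (m : ℝ) = (k : ℝ) * n := by
      field_simp at hk
      nlinarith [hk, Real.pi_pos]
    have hmk : (m : ℤ) = k * n := by exact_mod_cast this
    have hk1 : 1 ≤ k := by
      by_contra hk1
      push_neg at hk1
      have : k ≤ 0 := by omega
      nlinarith [hmk, (by exact_mod_cast hm0 : (0:ℤ) < (m:ℤ)), (by exact_mod_cast hn : (1:ℤ) ≤ (n:ℤ))]
    have : (n : ℤ) ≤ m := by nlinarith [hmk]
    omega

lemma exists_cos_sin (a c : ℝ) (h : a ^ 2 + c ^ 2 = 1) :
    ∃ θ : ℝ, Real.cos θ = a ∧ Real.sin θ = c := by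
  have ha1 : -1 ≤ a := by nlinarith
  have ha2 : a ≤ 1 := by nlinarith
  have hsin : Real.sin (Real.arccos a) = Real.sqrt (1 - a ^ 2) := Real.sin_arccos a
  have habs : Real.sqrt (1 - a ^ 2) = |c| := by
    rw [show 1 - a ^ 2 = c ^ 2 by linarith, Real.sqrt_sq_eq_abs]
  by_cases hc : 0 ≤ c
  · exact ⟨Real.arccos a, Real.cos_arccos ha1 ha2, by rw [hsin, habs, abs_of_nonneg hc]⟩
  · refine ⟨-Real.arccos a, by rw [Real.cos_neg]; exact Real.cos_arccos ha1 ha2, ?_⟩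
    rw [Real.sin_neg, hsin, habs, abs_of_neg (not_le.mp hc), neg_neg]

lemma SO3_block (M : Matrix (Fin 3) (Fin 3) ℝ)
    (hM : M ∈ Matrix.specialOrthogonalGroup (Fin 3) ℝ)
    (h02 : M 0 2 = 0) (h12 : M 1 2 = 0) (h22 : M 2 2 = 1) :
    ∃ θ : ℝ, M = RzMat θ := by
  rw [Matrix.mem_specialOrthogonalGroup_iff] at hM
  obtain ⟨horth, hdet⟩ := hM
  have h1 : M * Mᵀ = 1 := by
    have := (Matrix.mem_orthogonalGroup_iff _ _).mp horth
    exact this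
  have h2 : Mᵀ * M = 1 := mul_eq_one_comm.mp h1
  have e22 : M 2 0 ^ 2 + M 2 1 ^ 2 + M 2 2 ^ 2 = 1 := by
    have := congrFun (congrFun h1 2) 2
    simp [Matrix.mul_apply, Fin.sum_univ_succ, Matrix.one_apply] at this
    nlinarith [this]
  have h20 : M 2 0 = 0 := by nlinarith [sq_nonneg (M 2 0), sq_nonneg (M 2 1)]
  have h21 : M 2 1 = 0 := by nlinarith [sq_nonneg (M 2 0), sq_nonneg (M 2 1)]
  have e00 : M 0 0 ^ 2 + M 1 0 ^ 2 = 1 := by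
    have := congrFun (congrFun h2 0) 0
    simp [Matrix.mul_apply, Fin.sum_univ_succ, Matrix.one_apply, h20] at this
    nlinarith [this]
  have e01 : M 0 0 * M 0 1 + M 1 0 * M 1 1 = 0 := by
    have := congrFun (congrFun h2 0) 1
    simp [Matrix.mul_apply, Fin.sum_univ_succ, Matrix.one_apply, h20, h21] at this
    nlinarith [this]
  have edet : M 0 0 * M 1 1 - M 0 1 * M 1 0 = 1 := by
    rw [Matrix.det_fin_three] at hdet
    rw [h02, h12, h22, h20, h21] at hdet
    nlinarith [hdet]
  have hd : M 1 1 = M 0 0 := by linear_combination -(M 1 1) * e00 + (M 0 0) * edet + (M 1 0) * e01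
  have hb : M 0 1 = -(M 1 0) := by linear_combination -(M 0 1) * e00 + (M 0 0) * e01 - (M 1 0) * edet
  obtain ⟨θ, hcos, hsin⟩ := exists_cos_sin (M 0 0) (M 1 0) e00
  refine ⟨θ, ?_⟩
  ext i j
  fin_cases i <;> fin_cases j <;>
    simp [RzMat, hcos, hsin, h02, h12, h22, h20, h21, hd, hb, Matrix.vecHead, Matrix.vecTail]

lemma exists_fixed_vec (g : SO3) : ∃ v : Fin 3 → ℝ, v ≠ 0 ∧ g.1.mulVec v = v := by
  set A := g.1 with hA
  have hdetA : A.det = 1 := g.2.2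
  have hAT : Aᵀ * A = 1 := by
    have := g.2.1.1
    rwa [Matrix.star_eq_conjTranspose, Matrix.conjTranspose_eq_transpose_of_trivial] at this
  have key : (A - 1).det = 0 := by
    have h1 : (A - 1)ᵀ = Aᵀ * (1 - A) := by
      rw [Matrix.mul_sub, Matrix.mul_one, hAT, Matrix.transpose_sub, Matrix.transpose_one]
    have h2 : (A - 1).det = (1 - A).det := by
      rw [← Matrix.det_transpose (A - 1), h1, Matrix.det_mul, Matrix.det_transpose, hdetA,
        one_mul]
    have h3 : (1 - A) = -(A - 1) := by rw [neg_sub]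
    rw [h3, Matrix.det_neg] at h2
    simp [Fintype.card_fin] at h2
    linarith
  obtain ⟨v, hv0, hv⟩ := (Matrix.exists_mulVec_eq_zero_iff).mpr key
  refine ⟨v, hv0, ?_⟩
  rwa [Matrix.sub_mulVec, Matrix.one_mulVec, sub_eq_zero] at hv

lemma exists_conj_Rz (g : SO3) : ∃ (q : SO3) (θ : ℝ), q⁻¹ * g * q = Rz θ := by
  classical
  set A := g.1 with hA
  obtain ⟨v, hv0, hv⟩ := exists_fixed_vec g
  let V : EuclideanSpace ℝ (Fin 3) := WithLp.toLp 2 v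
  have hV0 : V ≠ 0 := fun h => hv0 (by simpa [V] using congrArg WithLp.ofLp h)
  let W : EuclideanSpace ℝ (Fin 3) := ‖V‖⁻¹ • V
  have hW1 : ‖W‖ = 1 := norm_smul_inv_norm hV0
  have hcard : Module.finrank ℝ (EuclideanSpace ℝ (Fin 3)) = Fintype.card (Fin 3) := by
    simp [finrank_euclideanSpace_fin]
  have horm : Orthonormal ℝ (Set.restrict ({2} : Set (Fin 3)) (fun _ => W)) := by
    refine ⟨fun i => hW1, ?_⟩
    intro i j hij
    exact absurd (Subtype.ext (i.2.trans j.2.symm)) hij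
  obtain ⟨b, hb⟩ := horm.exists_orthonormalBasis_extension_of_card_eq hcard
  have hW : ∀ k, b 2 k = W k := fun k => by rw [hb 2 rfl]
  let P : Matrix (Fin 3) (Fin 3) ℝ := Matrix.of fun i j => b j i
  have hPo : Pᵀ * P = 1 := by
    have hbo := b.orthonormal
    rw [orthonormal_iff_ite] at hbo
    ext i j
    have h := hbo i j
    rw [PiLp.inner_apply] at h
    simp only [RCLike.inner_apply, starRingEnd_apply, star_trivial] at h
    simpa [P, Matrix.mul_apply, Matrix.one_apply, mul_comm] using h
  have hd2 : P.det * P.det = 1 := by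
    have := congrArg Matrix.det hPo
    rwa [Matrix.det_mul, Matrix.det_transpose, Matrix.det_one] at this
  let D : Matrix (Fin 3) (Fin 3) ℝ := Matrix.diagonal ![P.det, 1, 1]
  let Q : Matrix (Fin 3) (Fin 3) ℝ := P * D
  have hQo : Qᵀ * Q = 1 := by
    show (P * D)ᵀ * (P * D) = 1
    rw [Matrix.transpose_mul, Matrix.diagonal_transpose, Matrix.mul_assoc,
      show Pᵀ * (P * D) = D by rw [← Matrix.mul_assoc, hPo, Matrix.one_mul],
      Matrix.diagonal_mul_diagonal]
    ext i j
    fin_cases i <;> fin_cases j <;>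
      simp [Matrix.diagonal_apply, Matrix.one_apply, hd2]
  have hQdet : Q.det = 1 := by
    show (P * D).det = 1
    rw [Matrix.det_mul, Matrix.det_diagonal]
    simp [Fin.prod_univ_succ, hd2]
  have hQmem : Q ∈ Matrix.specialOrthogonalGroup (Fin 3) ℝ := by
    rw [Matrix.mem_specialOrthogonalGroup_iff]
    refine ⟨?_, hQdet⟩
    rw [Matrix.mem_orthogonalGroup_iff]
    exact mul_eq_one_comm.mp hQo
  set q : SO3 := ⟨Q, hQmem⟩ with hq
  -- the third column of Q is W
  have hQcol : ∀ k, Q k 2 = W k := by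
    intro k
    show (P * D) k 2 = W k
    rw [Matrix.mul_apply]
    simp [D, P, Matrix.diagonal_apply, Fin.sum_univ_succ, hW]
  -- A fixes the third column of Q
  have hfix : ∀ i, ∑ k, A i k * Q k 2 = Q i 2 := by
    intro i
    have hWv : ∀ k, W k = ‖V‖⁻¹ * v k := fun k => rfl
    have h1 : A.mulVec (fun k => W k) = fun k => W k := by
      have : (fun k => W k) = ‖V‖⁻¹ • v := by funext k; rw [hWv]; rfl
      rw [this, Matrix.mulVec_smul, hv]
    have := congrFun h1 i
    simp only [Matrix.mulVec, dotProduct] at this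
    simpa [hQcol] using this
  have hM2 : ∀ i, (Qᵀ * A * Q) i 2 = (1 : Matrix (Fin 3) (Fin 3) ℝ) i 2 := by
    intro i
    rw [Matrix.mul_assoc, ← hQo]
    rw [Matrix.mul_apply, Matrix.mul_apply]
    refine Finset.sum_congr rfl fun k _ => ?_
    rw [Matrix.mul_apply, hfix]
  have hcoe : ((q⁻¹ * g * q : SO3) : Matrix (Fin 3) (Fin 3) ℝ) = Qᵀ * A * Q := by
    have hstar : ((q⁻¹ : SO3) : Matrix (Fin 3) (Fin 3) ℝ) = Qᵀ := by
      show star Q = Qᵀ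
      rw [Matrix.star_eq_conjTranspose, Matrix.conjTranspose_eq_transpose_of_trivial]
    show ((q⁻¹ : SO3) : Matrix (Fin 3) (Fin 3) ℝ) * A * Q = Qᵀ * A * Q
    rw [hstar]
  have hmem : Qᵀ * A * Q ∈ Matrix.specialOrthogonalGroup (Fin 3) ℝ := hcoe ▸ (q⁻¹ * g * q).2
  obtain ⟨θ, hθ⟩ := SO3_block (Qᵀ * A * Q) hmem (by simpa using hM2 0) (by simpa using hM2 1)
    (by simpa using hM2 2)
  exact ⟨q, θ, Subtype.ext (by rw [hcoe, hθ]; rfl)⟩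

/-- For every `n ≥ 1`, every cyclic subgroup of `SO(3)` of order `n` is conjugate in
`SO(3)` to the standard cyclic subgroup `C_n`; i.e. there is exactly one conjugacy
class of cyclic subgroups of order `n` in `SO(3)`. -/
theorem cyclic_subgroup_conjugate_to_Cn (n : ℕ) (hn : 1 ≤ n) (H : Subgroup SO3)
    (hcyc : IsCyclic H) (hcard : Nat.card H = n) :
    ∃ g : SO3, Subgroup.map (MulAut.conj g).toMonoidHom H = Cn n := by
  obtain ⟨g₀, hgen⟩ := hcyc
  have hH : H = Subgroup.zpowers (g₀ : SO3) := by
    apply le_antisymm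
    · intro x hx
      obtain ⟨k, hk⟩ := hgen ⟨x, hx⟩
      exact ⟨k, by simpa using congrArg Subtype.val hk⟩
    · exact Subgroup.zpowers_le.mpr g₀.2
  have horder : orderOf (g₀ : SO3) = n := by
    rw [← Nat.card_zpowers, ← hH, hcard]
  obtain ⟨q, θ, hq⟩ := exists_conj_Rz g₀
  have hconj : (MulAut.conj q⁻¹) (g₀ : SO3) = Rz θ := by
    rw [← hq]
    simp [MulAut.conj_apply, mul_assoc]
  have horderθ : orderOf (Rz θ) = n := by
    rw [← hconj, MulEquiv.orderOf_eq, horder]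
  have hn0 : (n : ℝ) ≠ 0 := Nat.cast_ne_zero.mpr (by omega)
  have hCn : Cn n = Subgroup.zpowers (Rz (2 * Real.pi / n)) := by
    rw [Cn, Subgroup.zpowers_eq_closure]
  have hle : Subgroup.zpowers (Rz θ) ≤ Cn n := by
    rw [hCn, Subgroup.zpowers_le]
    have hpow : Rz θ ^ n = 1 := by rw [← horderθ]; exact pow_orderOf_eq_one _
    rw [Rz_pow, Rz_eq_one_iff] at hpow
    obtain ⟨k, hk⟩ := hpow
    have hθ : θ = (k : ℝ) * (2 * Real.pi / n) := by field_simp at hk ⊢; linarith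
    exact ⟨k, by show Rz (2 * Real.pi / n) ^ k = Rz θ; rw [Rz_zpow, ← hθ]⟩
  have hcardCn : Nat.card (Cn n) = n := by
    rw [hCn, Nat.card_zpowers, orderOf_Rz n hn]
  have hfin : Finite (Cn n) := Nat.finite_of_card_ne_zero (by omega)
  have heq : Subgroup.zpowers (Rz θ) = Cn n :=
    Subgroup.eq_of_le_of_card_ge hle (by rw [hcardCn, Nat.card_zpowers, horderθ])
  refine ⟨q⁻¹, ?_⟩
  rw [hH, MonoidHom.map_zpowers]
  have hfg : (MulAut.conj q⁻¹).toMonoidHom (g₀ : SO3) = Rz θ := hconj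
  rw [hfg, heq]

end
end

section
/- The normaliser in SO(3) of the Klein four subgroup V = {1, diag(1,−1,−1), diag(−1,1,−1), diag(−1,−1,1)} equals the subgroup Σ̂_4 of all signed permutation matrices of determinant 1. -/
noncomputable section

/-- A diagonal `3 × 3` matrix. -/
def dMat (a b c : ℝ) : Matrix (Fin 3) (Fin 3) ℝ := !![a,0,0; 0,b,0; 0,0,c]

lemma dMat_mul (a b c a' b' c' : ℝ) :
    dMat a b c * dMat a' b' c' = dMat (a * a') (b * b') (c * c') := by
  ext i j
  fin_cases i <;> fin_cases j <;>
    simp [dMat, Matrix.mul_apply, Fin.sum_univ_succ, Matrix.vecHead, Matrix.vecTail]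

lemma dMat_one : dMat 1 1 1 = 1 := by
  ext i j
  fin_cases i <;> fin_cases j <;>
    simp [dMat, Matrix.one_apply, Matrix.vecHead, Matrix.vecTail]

lemma dMat_mem (a b c : ℝ) (ha : a = 1 ∨ a = -1) (hb : b = 1 ∨ b = -1)
    (hc : c = 1 ∨ c = -1) (habc : a * b * c = 1) :
    dMat a b c ∈ Matrix.specialOrthogonalGroup (Fin 3) ℝ := by
  rw [Matrix.mem_specialOrthogonalGroup_iff]
  constructor
  · rw [Matrix.mem_orthogonalGroup_iff]
    ext i j
    fin_cases i <;> fin_cases j <;>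
      simp [dMat, Matrix.mul_apply, Fin.sum_univ_succ, Matrix.star_eq_conjTranspose,
        Matrix.conjTranspose_apply, Matrix.one_apply, Matrix.vecHead, Matrix.vecTail] <;>
      rcases ha with rfl | rfl <;> rcases hb with rfl | rfl <;>
        rcases hc with rfl | rfl <;> norm_num
  · simp [dMat, Matrix.det_fin_three]
    nlinarith [habc]

lemma rho_eq_dMat : (ρ : SO3).1 = dMat 1 (-1) (-1) := rfl

/-- `diag (-1, 1, -1)` as an element of SO(3). -/
def ρ₂ : SO3 := ⟨dMat (-1) 1 (-1), dMat_mem _ _ _ (by norm_num) (by norm_num) (by norm_num) (by norm_num)⟩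

/-- `diag (-1, -1, 1)` as an element of SO(3). -/
def ρ₃ : SO3 := ⟨dMat (-1) (-1) 1, dMat_mem _ _ _ (by norm_num) (by norm_num) (by norm_num) (by norm_num)⟩

lemma dprod₂₂ : ρ₂ * ρ₂ = 1 := by
  apply Subtype.ext
  show dMat (-1) 1 (-1) * dMat (-1) 1 (-1) = 1
  rw [dMat_mul]; norm_num [dMat_one]

lemma dprod₃₃ : ρ₃ * ρ₃ = 1 := by
  apply Subtype.ext
  show dMat (-1) (-1) 1 * dMat (-1) (-1) 1 = 1
  rw [dMat_mul]; norm_num [dMat_one]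

lemma dprod₁₂ : ρ * ρ₂ = ρ₃ := by
  apply Subtype.ext
  show dMat 1 (-1) (-1) * dMat (-1) 1 (-1) = dMat (-1) (-1) 1
  rw [dMat_mul]; norm_num

lemma dprod₂₁ : ρ₂ * ρ = ρ₃ := by
  apply Subtype.ext
  show dMat (-1) 1 (-1) * dMat 1 (-1) (-1) = dMat (-1) (-1) 1
  rw [dMat_mul]; norm_num

lemma dprod₁₃ : ρ * ρ₃ = ρ₂ := by
  apply Subtype.ext
  show dMat 1 (-1) (-1) * dMat (-1) (-1) 1 = dMat (-1) 1 (-1)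
  rw [dMat_mul]; norm_num

lemma dprod₃₁ : ρ₃ * ρ = ρ₂ := by
  apply Subtype.ext
  show dMat (-1) (-1) 1 * dMat 1 (-1) (-1) = dMat (-1) 1 (-1)
  rw [dMat_mul]; norm_num

lemma dprod₂₃ : ρ₂ * ρ₃ = ρ := by
  apply Subtype.ext
  show dMat (-1) 1 (-1) * dMat (-1) (-1) 1 = dMat 1 (-1) (-1)
  rw [dMat_mul]; norm_num

lemma dprod₃₂ : ρ₃ * ρ₂ = ρ := by
  apply Subtype.ext
  show dMat (-1) (-1) 1 * dMat (-1) 1 (-1) = dMat 1 (-1) (-1)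
  rw [dMat_mul]; norm_num

/-- The Klein four subgroup `V = {1, diag(1,-1,-1), diag(-1,1,-1), diag(-1,-1,1)}`
of SO(3) (the dihedral subgroup `D₄` of order 4). -/
def V : Subgroup SO3 where
  carrier := {1, ρ, ρ₂, ρ₃}
  one_mem' := by left; rfl
  mul_mem' := by
    rintro x y (rfl | rfl | rfl | rfl) (rfl | rfl | rfl | rfl) <;>
      simp [Set.mem_insert_iff, one_mul, mul_one, rho_sq, dprod₂₂, dprod₃₃,
        dprod₁₂, dprod₂₁, dprod₁₃, dprod₃₁, dprod₂₃, dprod₃₂]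
  inv_mem' := by
    rintro x (rfl | rfl | rfl | rfl) <;>
      simp [Set.mem_insert_iff, rho_inv, inv_eq_of_mul_eq_one_right rho_sq,
        inv_eq_of_mul_eq_one_right dprod₂₂, inv_eq_of_mul_eq_one_right dprod₃₃]
/-- A matrix is a signed permutation matrix if all its entries are `0`, `1` or `-1`,
and it has exactly one nonzero entry in each row and in each column. -/
def IsSignedPerm (A : Matrix (Fin 3) (Fin 3) ℝ) : Prop :=
  (∀ i j, A i j = 0 ∨ A i j = 1 ∨ A i j = -1) ∧
    (∀ i, ∃! j, A i j ≠ 0) ∧ (∀ j, ∃! i, A i j ≠ 0)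

lemma isSignedPerm_one : IsSignedPerm (1 : Matrix (Fin 3) (Fin 3) ℝ) := by
  refine ⟨fun i j => ?_, fun i => ⟨i, by simp, fun j hj => ?_⟩,
    fun j => ⟨j, by simp, fun i hi => ?_⟩⟩
  · rcases eq_or_ne i j with rfl | h
    · simp
    · simp [Matrix.one_apply_ne h]
  · by_contra hne
    exact hj (Matrix.one_apply_ne (Ne.symm hne))
  · by_contra hne
    exact hi (Matrix.one_apply_ne hne)

lemma isSignedPerm_star {A : Matrix (Fin 3) (Fin 3) ℝ} (h : IsSignedPerm A) :
    IsSignedPerm (star A) := by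
  obtain ⟨h1, h2, h3⟩ := h
  refine ⟨fun i j => ?_, fun i => ?_, fun j => ?_⟩
  · simpa [Matrix.star_apply] using h1 j i
  · simpa [Matrix.star_apply] using h3 i
  · simpa [Matrix.star_apply] using h2 j

lemma mul_entry_of_row {A B : Matrix (Fin 3) (Fin 3) ℝ} {i k₀ : Fin 3}
    (hk : ∀ k, k ≠ k₀ → A i k = 0) (j : Fin 3) : (A * B) i j = A i k₀ * B k₀ j := by
  rw [Matrix.mul_apply]
  exact Finset.sum_eq_single k₀ (fun k _ hk' => by rw [hk k hk', zero_mul]) (by simp)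

lemma mul_entry_of_col {A B : Matrix (Fin 3) (Fin 3) ℝ} {j k₀ : Fin 3}
    (hk : ∀ k, k ≠ k₀ → B k j = 0) (i : Fin 3) : (A * B) i j = A i k₀ * B k₀ j := by
  rw [Matrix.mul_apply]
  exact Finset.sum_eq_single k₀ (fun k _ hk' => by rw [hk k hk', mul_zero]) (by simp)

lemma isSignedPerm_mul {A B : Matrix (Fin 3) (Fin 3) ℝ}
    (hA : IsSignedPerm A) (hB : IsSignedPerm B) : IsSignedPerm (A * B) := by
  obtain ⟨hA1, hA2, hA3⟩ := hA
  obtain ⟨hB1, hB2, hB3⟩ := hB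
  refine ⟨fun i j => ?_, fun i => ?_, fun j => ?_⟩
  · obtain ⟨k₀, hk₀, hk₀u⟩ := hA2 i
    have hzero : ∀ k, k ≠ k₀ → A i k = 0 := fun k hk => by
      by_contra h; exact hk (hk₀u k h)
    rw [mul_entry_of_row hzero]
    rcases hA1 i k₀ with h | h | h <;> rcases hB1 k₀ j with h' | h' | h' <;>
      simp [h, h']
  · obtain ⟨k₀, hk₀, hk₀u⟩ := hA2 i
    have hzero : ∀ k, k ≠ k₀ → A i k = 0 := fun k hk => by
      by_contra h; exact hk (hk₀u k h)
    obtain ⟨j₀, hj₀, hj₀u⟩ := hB2 k₀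
    refine ⟨j₀, ?_, fun j hj => ?_⟩
    · show (A * B) i j₀ ≠ 0
      rw [mul_entry_of_row hzero]
      exact mul_ne_zero hk₀ hj₀
    · have hj' : (A * B) i j ≠ 0 := hj
      rw [mul_entry_of_row hzero] at hj'
      exact hj₀u j (right_ne_zero_of_mul hj')
  · obtain ⟨k₀, hk₀, hk₀u⟩ := hB3 j
    have hzero : ∀ k, k ≠ k₀ → B k j = 0 := fun k hk => by
      by_contra h; exact hk (hk₀u k h)
    obtain ⟨i₀, hi₀, hi₀u⟩ := hA3 k₀
    refine ⟨i₀, ?_, fun i hi => ?_⟩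
    · show (A * B) i₀ j ≠ 0
      rw [mul_entry_of_col hzero]
      exact mul_ne_zero hi₀ hk₀
    · have hi' : (A * B) i j ≠ 0 := hi
      rw [mul_entry_of_col hzero] at hi'
      exact hi₀u i (left_ne_zero_of_mul hi')

/-- `Σ̂₄ ⊆ SO(3)`: the subgroup of all signed permutation matrices of determinant 1
(the rotation group of the cube). -/
def SigmaHat4 : Subgroup SO3 where
  carrier := {g | IsSignedPerm g.1}
  one_mem' := isSignedPerm_one
  mul_mem' := fun hx hy => isSignedPerm_mul hx hy
  inv_mem' := fun hx => isSignedPerm_star hx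

/-- `Â₄ ⊆ SO(3)`: the subgroup of signed permutation matrices of determinant 1 whose
underlying permutation is even (the rotation group of a regular tetrahedron). -/
def A4Hat : Subgroup SO3 where
  carrier := {g | IsSignedPerm g.1 ∧
    ∃ σ : Equiv.Perm (Fin 3), Equiv.Perm.sign σ = 1 ∧ ∀ i, g.1 i (σ i) ≠ 0}
  one_mem' := ⟨isSignedPerm_one, 1, by simp, fun i => by simp⟩
  mul_mem' := by
    rintro x y ⟨hx, σ, hσ, hxσ⟩ ⟨hy, τ, hτ, hyτ⟩
    refine ⟨isSignedPerm_mul hx hy, σ.trans τ, ?_, fun i => ?_⟩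
    · have h : σ.trans τ = τ * σ := rfl
      rw [h, Equiv.Perm.sign_mul, hσ, hτ, mul_one]
    · show (x.1 * y.1) i (σ.trans τ i) ≠ 0
      obtain ⟨k₀, hk₀, hu⟩ := hx.2.1 i
      have hσi : σ i = k₀ := hu _ (hxσ i)
      have hzero : ∀ k, k ≠ σ i → x.1 i k = 0 := by
        intro k hk
        by_contra hke
        exact hk ((hu k hke).trans hσi.symm)
      rw [mul_entry_of_row hzero]
      exact mul_ne_zero (hxσ i) (hyτ (σ i))
  inv_mem' := by
    rintro x ⟨hx, σ, hσ, hxσ⟩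
    refine ⟨isSignedPerm_star hx, σ⁻¹, by simp [hσ], fun i => ?_⟩
    show star x.1 i (σ⁻¹ i) ≠ 0
    rw [Matrix.star_apply]
    simpa using hxσ (σ⁻¹ i)


/-! ### Auxiliary lemmas for the normalizer theorem -/

lemma mem_V_iff (x : SO3) : x ∈ V ↔ x = 1 ∨ x = ρ ∨ x = ρ₂ ∨ x = ρ₃ := by
  show x ∈ ({1, ρ, ρ₂, ρ₃} : Set SO3) ↔ _
  simp [Set.mem_insert_iff]

lemma vec3_apply (v : Fin 3 → ℝ) (i : Fin 3) : ![v 0, v 1, v 2] i = v i := by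
  fin_cases i <;> simp

lemma dMat_diag (a b c : ℝ) (i : Fin 3) : dMat a b c i i = ![a, b, c] i := by
  fin_cases i <;> simp [dMat]

lemma dMat_off (a b c : ℝ) {i j : Fin 3} (h : i ≠ j) : dMat a b c i j = 0 := by
  fin_cases i <;> fin_cases j <;> simp_all [dMat, Matrix.vecHead, Matrix.vecTail]

lemma mul_dMat_apply (M : Matrix (Fin 3) (Fin 3) ℝ) (a b c : ℝ) (i j : Fin 3) :
    (M * dMat a b c) i j = M i j * ![a, b, c] j := by
  fin_cases j <;>
    simp [dMat, Matrix.mul_apply, Fin.sum_univ_three, Matrix.vecHead, Matrix.vecTail]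

lemma dMat_mul_apply (M : Matrix (Fin 3) (Fin 3) ℝ) (a b c : ℝ) (i j : Fin 3) :
    (dMat a b c * M) i j = ![a, b, c] i * M i j := by
  fin_cases i <;>
    simp [dMat, Matrix.mul_apply, Fin.sum_univ_three, Matrix.vecHead, Matrix.vecTail]

/-- `eVec a` is the diagonal of the element of `V` whose `+1` is in position `a`. -/
def eVec (a : Fin 3) : Fin 3 → ℝ := fun j => if j = a then 1 else -1

lemma eVec_iff {a b : Fin 3} {j i : Fin 3} (h : eVec a j = eVec b i) : (j = a ↔ i = b) := by
  by_cases h1 : j = a <;> by_cases h2 : i = b <;> simp_all [eVec] <;> norm_num at h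

lemma eVec_pos {a : Fin 3} : eVec a a = 1 := if_pos rfl

lemma eVec_neg {a j : Fin 3} (h : j ≠ a) : eVec a j = -1 := if_neg h

lemma rho_val_eVec : (ρ : SO3).1 = dMat (eVec 0 0) (eVec 0 1) (eVec 0 2) := by
  rw [eVec_pos, eVec_neg (by decide), eVec_neg (by decide)]
  rfl

lemma rho₂_val_eVec : (ρ₂ : SO3).1 = dMat (eVec 1 0) (eVec 1 1) (eVec 1 2) := by
  rw [eVec_pos, eVec_neg (by decide), eVec_neg (by decide)]
  rfl

lemma rho₃_val_eVec : (ρ₃ : SO3).1 = dMat (eVec 2 0) (eVec 2 1) (eVec 2 2) := by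
  rw [eVec_pos, eVec_neg (by decide), eVec_neg (by decide)]
  rfl

lemma entry_rel (g : SO3) (v w : Fin 3 → ℝ)
    (h : g.1 * dMat (v 0) (v 1) (v 2) = dMat (w 0) (w 1) (w 2) * g.1) :
    ∀ i j, g.1 i j ≠ 0 → v j = w i := by
  intro i j hne
  have h' := congrFun (congrFun h i) j
  rw [mul_dMat_apply, dMat_mul_apply, vec3_apply, vec3_apply] at h'
  have h'' : v j * g.1 i j = w i * g.1 i j := by linear_combination h'
  exact mul_right_cancel₀ hne h''

lemma isSignedPerm_of_pattern (g : SO3) (σ : Equiv.Perm (Fin 3))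
    (h : ∀ i j, i ≠ σ j → g.1 i j = 0) : IsSignedPerm g.1 := by
  have horth : star g.1 * g.1 = 1 := g.2.1.1
  have hsq : ∀ j, g.1 (σ j) j * g.1 (σ j) j = 1 := by
    intro j
    have h1 : (star g.1 * g.1) j j = (1 : Matrix (Fin 3) (Fin 3) ℝ) j j := by rw [horth]
    rw [Matrix.mul_apply] at h1
    have hsum : ∑ k, (star g.1) j k * g.1 k j = g.1 (σ j) j * g.1 (σ j) j := by
      refine Finset.sum_eq_single (σ j) (fun k _ hk => ?_) (by simp)
      rw [Matrix.star_apply, star_trivial, h k j hk, mul_zero]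
    rw [hsum] at h1
    simpa [Matrix.one_apply] using h1
  have hnz : ∀ j, g.1 (σ j) j ≠ 0 := by
    intro j hz
    have := hsq j
    rw [hz, mul_zero] at this
    norm_num at this
  refine ⟨fun i j => ?_, fun i => ?_, fun j => ?_⟩
  · by_cases hij : i = σ j
    · subst hij
      rcases mul_self_eq_one_iff.mp (hsq j) with h1 | h1
      · exact Or.inr (Or.inl h1)
      · exact Or.inr (Or.inr h1)
    · exact Or.inl (h i j hij)
  · refine ⟨σ.symm i, ?_, fun j hj => ?_⟩
    · have := hnz (σ.symm i)
      rwa [Equiv.apply_symm_apply] at this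
    · have hi : i = σ j := by
        by_contra hc; exact hj (h i j hc)
      rw [hi, Equiv.symm_apply_apply]
  · refine ⟨σ j, hnz j, fun i hi => ?_⟩
    by_contra hc
    exact hi (h i j hc)

lemma signedPerm_of_conj (g : SO3) (p q : Fin 3) (hpq : p ≠ q)
    (h1 : g.1 * rhoMat = dMat (eVec p 0) (eVec p 1) (eVec p 2) * g.1)
    (h2 : g.1 * dMat (-1) 1 (-1) = dMat (eVec q 0) (eVec q 1) (eVec q 2) * g.1) :
    IsSignedPerm g.1 := by
  have e0 : dMat (eVec 0 0) (eVec 0 1) (eVec 0 2) = rhoMat := rho_val_eVec.symm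
  have e1 : dMat (eVec 1 0) (eVec 1 1) (eVec 1 2) = dMat (-1) 1 (-1) := rho₂_val_eVec.symm
  have hP : ∀ i j, g.1 i j ≠ 0 → eVec 0 j = eVec p i :=
    entry_rel g (eVec 0) (eVec p) (by rw [e0]; exact h1)
  have hQ : ∀ i j, g.1 i j ≠ 0 → eVec 1 j = eVec q i :=
    entry_rel g (eVec 1) (eVec q) (by rw [e1]; exact h2)
  have hbij : Function.Bijective (![p, q, -(p + q)] : Fin 3 → Fin 3) := by
    have : ∀ p q : Fin 3, p ≠ q → Function.Bijective (![p, q, -(p + q)] : Fin 3 → Fin 3) := by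
      decide
    exact this p q hpq
  apply isSignedPerm_of_pattern g (Equiv.ofBijective _ hbij)
  intro i j hij
  by_contra hgz
  apply hij
  have k1 := eVec_iff (hP i j hgz)
  have k2 := eVec_iff (hQ i j hgz)
  show i = ![p, q, -(p + q)] j
  fin_cases j
  · simpa using k1.1 rfl
  · simpa using k2.1 rfl
  · have hip : i ≠ p := fun h => by
      have := k1.2 h
      exact absurd this (by decide)
    have hiq : i ≠ q := fun h => by
      have := k2.2 h
      exact absurd this (by decide)
    have key : ∀ i p q : Fin 3, p ≠ q → i ≠ p → i ≠ q → i = -(p + q) := by decide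
    simpa using key i p q hpq hip hiq

lemma conj_dMat_eq (g : SO3) (hg : IsSignedPerm g.1) (d : Fin 3 → ℝ)
    (hd : ∀ i, d i = 1 ∨ d i = -1) :
    ∃ k : Fin 3 → Fin 3,
      g.1 * dMat (d 0) (d 1) (d 2) * star g.1 = dMat (d (k 0)) (d (k 1)) (d (k 2)) := by
  obtain ⟨h1, h2, h3⟩ := hg
  set k : Fin 3 → Fin 3 := fun i => (h2 i).choose with hk
  have hk1 : ∀ i, g.1 i (k i) ≠ 0 := fun i => (h2 i).choose_spec.1
  have hk2 : ∀ i j, g.1 i j ≠ 0 → j = k i := fun i j hj => (h2 i).choose_spec.2 j hj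
  have hsq : ∀ i, g.1 i (k i) * g.1 i (k i) = 1 := by
    intro i
    rcases h1 i (k i) with h | h | h
    · exact absurd h (hk1 i)
    · rw [h]; norm_num
    · rw [h]; norm_num
  refine ⟨k, ?_⟩
  have main : ∀ i j, (g.1 * dMat (d 0) (d 1) (d 2) * star g.1) i j
      = g.1 i (k i) * d (k i) * g.1 j (k i) := by
    intro i j
    rw [Matrix.mul_apply]
    refine Finset.sum_eq_single (k i) (fun m _ hm => ?_) (by simp)
      |>.trans ?_
    · rw [mul_dMat_apply]
      have hz : g.1 i m = 0 := by
        by_contra hc; exact hm (hk2 i m hc)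
      rw [hz, zero_mul, zero_mul]
    · rw [mul_dMat_apply, vec3_apply, Matrix.star_apply, star_trivial]
  have hvk : ∀ i, ![d (k 0), d (k 1), d (k 2)] i = d (k i) := by
    intro i; fin_cases i <;> simp
  ext i j
  by_cases hij : i = j
  · subst hij
    rw [main i i, dMat_diag, hvk]
    calc g.1 i (k i) * d (k i) * g.1 i (k i)
        = d (k i) * (g.1 i (k i) * g.1 i (k i)) := by ring
      _ = d (k i) := by rw [hsq i, mul_one]
  · rw [main i j, dMat_off _ _ _ hij]
    have hz : g.1 j (k i) = 0 := by
      by_contra hc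
      obtain ⟨r, _, hru⟩ := h3 (k i)
      have hi : i = r := hru i (hk1 i)
      have hj : j = r := hru j hc
      exact hij (hi.trans hj.symm)
    rw [hz, mul_zero]

lemma conj_mem_V (g : SO3) (hg : IsSignedPerm g.1) {h : SO3} (hh : h ∈ V) :
    g * h * g⁻¹ ∈ V := by
  rw [mem_V_iff] at hh
  obtain ⟨d, hd, hval⟩ : ∃ d : Fin 3 → ℝ, (∀ i, d i = 1 ∨ d i = -1) ∧
      h.1 = dMat (d 0) (d 1) (d 2) := by
    rcases hh with rfl | rfl | rfl | rfl
    · exact ⟨![1, 1, 1], fun i => by fin_cases i <;> norm_num, by simp [dMat_one]⟩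
    · exact ⟨![1, -1, -1], fun i => by fin_cases i <;> norm_num, rfl⟩
    · exact ⟨![-1, 1, -1], fun i => by fin_cases i <;> norm_num, rfl⟩
    · exact ⟨![-1, -1, 1], fun i => by fin_cases i <;> norm_num, rfl⟩
  obtain ⟨k, hk⟩ := conj_dMat_eq g hg d hd
  have hcoe : (g * h * g⁻¹).1 = g.1 * h.1 * star g.1 := rfl
  have hc : (g * h * g⁻¹).1 = dMat (d (k 0)) (d (k 1)) (d (k 2)) := by
    rw [hcoe, hval, hk]
  have hdet : ((g * h * g⁻¹).1).det = 1 := (g * h * g⁻¹).2.2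
  rw [hc] at hdet
  have hprod : d (k 0) * d (k 1) * d (k 2) = 1 := by
    have : (dMat (d (k 0)) (d (k 1)) (d (k 2))).det
        = d (k 0) * d (k 1) * d (k 2) := by
      simp [dMat, Matrix.det_fin_three]
    rw [this] at hdet
    exact hdet
  rw [mem_V_iff]
  rcases hd (k 0) with h0 | h0 <;> rcases hd (k 1) with h1 | h1 <;>
    rcases hd (k 2) with h2 | h2 <;> rw [h0, h1, h2] at hc hprod
  · left; exact Subtype.ext (by rw [hc, dMat_one]; rfl)
  · norm_num at hprod
  · norm_num at hprod
  · right; left; exact Subtype.ext hc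
  · norm_num at hprod
  · right; right; left; exact Subtype.ext hc
  · right; right; right; exact Subtype.ext hc
  · norm_num at hprod

lemma rho_ne_one : (ρ : SO3) ≠ 1 := by
  intro h
  have h' : rhoMat = (1 : Matrix (Fin 3) (Fin 3) ℝ) := congrArg Subtype.val h
  have := congrFun (congrFun h' 1) 1
  simp [rhoMat, Matrix.one_apply_eq, Matrix.vecHead, Matrix.vecTail] at this
  norm_num at this

lemma rho₂_ne_one : (ρ₂ : SO3) ≠ 1 := by
  intro h
  have h' : dMat (-1) 1 (-1) = (1 : Matrix (Fin 3) (Fin 3) ℝ) := congrArg Subtype.val h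
  have := congrFun (congrFun h' 0) 0
  simp [dMat, Matrix.one_apply_eq] at this
  norm_num at this

lemma rho_ne_rho₂ : (ρ : SO3) ≠ ρ₂ := by
  intro h
  have := congrFun (congrFun (congrArg Subtype.val h) 0) 0
  simp [ρ, ρ₂, rhoMat, dMat] at this
  norm_num at this

/-- The normaliser in `SO(3)` of the Klein four subgroup
`V = {1, diag(1,-1,-1), diag(-1,1,-1), diag(-1,-1,1)}` is the subgroup `Σ̂₄` of all
signed permutation matrices of determinant 1. -/
theorem normalizer_V_eq_SigmaHat4 : Subgroup.normalizer (V : Set SO3) = SigmaHat4 := by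
  apply le_antisymm
  · intro g hg
    rw [Subgroup.mem_normalizer_iff] at hg
    have hρV : ρ ∈ V := (mem_V_iff ρ).2 (Or.inr (Or.inl rfl))
    have hρ₂V : ρ₂ ∈ V := (mem_V_iff ρ₂).2 (Or.inr (Or.inr (Or.inl rfl)))
    have hX := (mem_V_iff _).1 ((hg ρ).1 hρV)
    have hY := (mem_V_iff _).1 ((hg ρ₂).1 hρ₂V)
    have key : ∀ (h X : SO3), g * h * g⁻¹ = X → g.1 * h.1 = X.1 * g.1 := by
      intro h X e
      have e' : g * h = X * g := by rw [← e, inv_mul_cancel_right]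
      exact congrArg Subtype.val e'
    have huncj : ∀ h₁ h₂ : SO3, g * h₁ * g⁻¹ = g * h₂ * g⁻¹ → h₁ = h₂ := by
      intro h₁ h₂ e
      exact mul_left_cancel (mul_right_cancel e)
    show IsSignedPerm g.1
    rcases hX with e1 | e1 | e1 | e1
    · exact absurd (huncj ρ 1 (by rw [e1]; simp)) rho_ne_one
    · rcases hY with e2 | e2 | e2 | e2
      · exact absurd (huncj ρ₂ 1 (by rw [e2]; simp)) rho₂_ne_one
      · exact absurd (huncj ρ ρ₂ (e1.trans e2.symm)) rho_ne_rho₂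
      · have m1 := key ρ ρ e1
        have m2 := key ρ₂ ρ₂ e2
        rw [rho_val_eVec] at m1
        rw [rho₂_val_eVec] at m2
        exact signedPerm_of_conj g 0 1 (by decide) m1 m2
      · have m1 := key ρ ρ e1
        have m2 := key ρ₂ ρ₃ e2
        rw [rho_val_eVec] at m1
        rw [rho₃_val_eVec] at m2
        exact signedPerm_of_conj g 0 2 (by decide) m1 m2
    · rcases hY with e2 | e2 | e2 | e2
      · exact absurd (huncj ρ₂ 1 (by rw [e2]; simp)) rho₂_ne_one
      · have m1 := key ρ ρ₂ e1
        have m2 := key ρ₂ ρ e2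
        rw [rho₂_val_eVec] at m1
        rw [rho_val_eVec] at m2
        exact signedPerm_of_conj g 1 0 (by decide) m1 m2
      · exact absurd (huncj ρ ρ₂ (e1.trans e2.symm)) rho_ne_rho₂
      · have m1 := key ρ ρ₂ e1
        have m2 := key ρ₂ ρ₃ e2
        rw [rho₂_val_eVec] at m1
        rw [rho₃_val_eVec] at m2
        exact signedPerm_of_conj g 1 2 (by decide) m1 m2
    · rcases hY with e2 | e2 | e2 | e2
      · exact absurd (huncj ρ₂ 1 (by rw [e2]; simp)) rho₂_ne_one
      · have m1 := key ρ ρ₃ e1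
        have m2 := key ρ₂ ρ e2
        rw [rho₃_val_eVec] at m1
        rw [rho_val_eVec] at m2
        exact signedPerm_of_conj g 2 0 (by decide) m1 m2
      · have m1 := key ρ ρ₃ e1
        have m2 := key ρ₂ ρ₂ e2
        rw [rho₃_val_eVec] at m1
        rw [rho₂_val_eVec] at m2
        exact signedPerm_of_conj g 2 1 (by decide) m1 m2
      · exact absurd (huncj ρ ρ₂ (e1.trans e2.symm)) rho_ne_rho₂
  · intro g hg
    have hg' : IsSignedPerm g.1 := hg
    rw [Subgroup.mem_normalizer_iff]
    intro h
    constructor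
    · exact fun hh => conj_mem_V g hg' hh
    · intro hh
      have hginv : IsSignedPerm (g⁻¹).1 := SigmaHat4.inv_mem hg
      have := conj_mem_V g⁻¹ hginv hh
      have heq : g⁻¹ * (g * h * g⁻¹) * (g⁻¹)⁻¹ = h := by group
      rwa [heq] at this

end
end

section
/- The subgroup Σ̂_4 of SO(3) of all signed permutation matrices of determinant 1 (the rotation group of the cube) equals its own normaliser in SO(3). -/
noncomputable section

open Matrix in
lemma fin3_cases' (x : Fin 3) : x = 0 ∨ x = 1 ∨ x = 2 := by fin_cases x <;> simp

lemma repr_of_isSignedPerm {A : Matrix (Fin 3) (Fin 3) ℝ} (h : IsSignedPerm A) :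
    ∃ f : Fin 3 → Fin 3, Function.Injective f ∧ ∃ ε : Fin 3 → ℝ,
      (∀ i, ε i = 1 ∨ ε i = -1) ∧ ∀ i j, A i j = if j = f i then ε i else 0 := by
  obtain ⟨h1, h2, h3⟩ := h
  choose f hf hfu using h2
  have hinj : Function.Injective f := by
    intro a b hab
    obtain ⟨i, _, hiu⟩ := h3 (f a)
    have ha := hiu a (hf a)
    have hb := hiu b (by rw [hab]; exact hf b)
    rw [ha, hb]
  refine ⟨f, hinj, fun i => A i (f i), fun i => ?_, fun i j => ?_⟩
  · rcases h1 i (f i) with h | h | h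
    · exact absurd h (hf i)
    · exact Or.inl h
    · exact Or.inr h
  · by_cases hj : j = f i
    · subst hj; simp
    · rw [if_neg hj]
      by_contra hne
      exact hj (hfu i j hne)

open Matrix in
lemma row_eq {A : Matrix (Fin 3) (Fin 3) ℝ} {f : Fin 3 → Fin 3} {ε : Fin 3 → ℝ}
    (hA : ∀ i j, A i j = if j = f i then ε i else 0) (v : Fin 3 → ℝ) (i : Fin 3) :
    (A *ᵥ v) i = ε i * v (f i) := by
  show ∑ j, A i j * v j = _
  rw [Finset.sum_eq_single (f i)]
  · rw [hA]; simp
  · intro b _ hb; rw [hA, if_neg hb, zero_mul]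
  · simp

open Matrix in
lemma fixed_axis {A : Matrix (Fin 3) (Fin 3) ℝ} (hsp : IsSignedPerm A)
    (hdet : A.det = 1) (htr : A.trace = 1) {v : Fin 3 → ℝ} (hv : A *ᵥ v = v) :
    ∃ k, ∀ j, j ≠ k → v j = 0 := by
  obtain ⟨f, hinj, ε, hε, hA⟩ := repr_of_isSignedPerm hsp
  have hv' : ∀ i, ε i * v (f i) = v i := fun i => by rw [← row_eq hA v i, hv]
  rw [Matrix.trace_fin_three] at htr
  rw [Matrix.det_fin_three] at hdet
  rcases fin3_cases' (f 0) with hf0 | hf0 | hf0 <;>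
    rcases fin3_cases' (f 1) with hf1 | hf1 | hf1 <;>
    rcases fin3_cases' (f 2) with hf2 | hf2 | hf2 <;>
    [skip; skip; skip; skip; skip; skip; skip; skip; skip; skip; skip; skip; skip;
     skip; skip; skip; skip; skip; skip; skip; skip; skip; skip; skip; skip; skip; skip] <;>
    first
      | exact absurd (hinj (hf0.trans hf1.symm)) (by decide)
      | exact absurd (hinj (hf0.trans hf2.symm)) (by decide)
      | exact absurd (hinj (hf1.trans hf2.symm)) (by decide)
      | skip
  all_goals simp [hA, hf0, hf1, hf2] at htr hdet
  -- identity case: impossible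
  · rcases hε 0 with h0 | h0 <;> rcases hε 1 with h1 | h1 <;> rcases hε 2 with h2 | h2 <;>
      rw [h0, h1, h2] at htr hdet <;> linarith
  -- swap of 1 and 2, axis 0
  · have e1 := hv' 1; rw [hf1] at e1
    have e2 := hv' 2; rw [hf2] at e2
    rw [htr] at hdet
    have h12 : ε 1 * ε 2 = -1 := by linear_combination -hdet
    have hv1 : v 1 = 0 := by
      linear_combination (-(1/2 : ℝ)) * e1 - (ε 1 / 2) * e2 + (v 1 / 2) * h12
    have hv2 : v 2 = 0 := by rw [← e2, hv1, mul_zero]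
    exact ⟨0, fun j hj => by
      fin_cases j
      · exact absurd rfl hj
      · exact hv1
      · exact hv2⟩
  -- swap of 0 and 1, axis 2
  · have e0 := hv' 0; rw [hf0] at e0
    have e1 := hv' 1; rw [hf1] at e1
    rw [htr] at hdet
    have h01 : ε 0 * ε 1 = -1 := by linear_combination -hdet
    have hv0 : v 0 = 0 := by
      linear_combination (-(1/2 : ℝ)) * e0 - (ε 0 / 2) * e1 + (v 0 / 2) * h01
    have hv1 : v 1 = 0 := by rw [← e1, hv0, mul_zero]
    exact ⟨2, fun j hj => by
      fin_cases j
      · exact hv0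
      · exact hv1
      · exact absurd rfl hj⟩
  -- swap of 0 and 2, axis 1
  · have e0 := hv' 0; rw [hf0] at e0
    have e2 := hv' 2; rw [hf2] at e2
    rw [htr] at hdet
    have h02 : ε 0 * ε 2 = -1 := by linear_combination -hdet
    have hv0 : v 0 = 0 := by
      linear_combination (-(1/2 : ℝ)) * e0 - (ε 0 / 2) * e2 + (v 0 / 2) * h02
    have hv2 : v 2 = 0 := by rw [← e2, hv0, mul_zero]
    exact ⟨1, fun j hj => by
      fin_cases j
      · exact hv0
      · exact absurd rfl hj
      · exact hv2⟩

lemma isSignedPerm_of_repr {A : Matrix (Fin 3) (Fin 3) ℝ} (f : Fin 3 → Fin 3)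
    (hf : Function.Injective f) (ε : Fin 3 → ℝ) (hε : ∀ i, ε i = 1 ∨ ε i = -1)
    (hA : ∀ i j, A i j = if j = f i then ε i else 0) : IsSignedPerm A := by
  have hε0 : ∀ i, ε i ≠ 0 := fun i => by rcases hε i with h | h <;> rw [h] <;> norm_num
  have hsurj : Function.Surjective f := Finite.surjective_of_injective hf
  refine ⟨fun i j => ?_, fun i => ?_, fun j => ?_⟩
  · rw [hA]; split
    · rcases hε i with h | h
      · exact Or.inr (Or.inl h)
      · exact Or.inr (Or.inr h)
    · exact Or.inl rfl
  · refine ⟨f i, ?_, fun y hy => ?_⟩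
    · show A i (f i) ≠ 0
      rw [hA, if_pos rfl]; exact hε0 i
    · have hy' : A i y ≠ 0 := hy
      rw [hA] at hy'
      by_contra hne
      exact hy' (if_neg hne)
  · obtain ⟨i, rfl⟩ := hsurj j
    refine ⟨i, ?_, fun y hy => ?_⟩
    · show A i (f i) ≠ 0
      rw [hA, if_pos rfl]; exact hε0 i
    · have hy' : A y (f i) ≠ 0 := hy
      rw [hA] at hy'
      rename' hy' => hy
      by_cases hc : f i = f y
      · exact (hf hc).symm
      · exact absurd (if_neg hc) hy

open Matrix in
lemma exists_Q (c : Fin 3) : ∃ Q : SO3, IsSignedPerm Q.1 ∧ Q.1.trace = 1 ∧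
    Q.1 *ᵥ Pi.single c 1 = Pi.single c 1 := by
  fin_cases c
  · refine ⟨⟨!![1,0,0;0,0,-1;0,1,0], ?_⟩, ?_, ?_, ?_⟩
    · rw [Matrix.mem_specialOrthogonalGroup_iff]
      constructor
      · rw [Matrix.mem_orthogonalGroup_iff]
        ext i j
        fin_cases i <;> fin_cases j <;>
          simp [Matrix.mul_apply, Fin.sum_univ_succ, Matrix.star_eq_conjTranspose,
            Matrix.conjTranspose_apply, Matrix.vecHead, Matrix.vecTail]
      · simp [Matrix.det_fin_three]
    · refine isSignedPerm_of_repr ![0,2,1] (by decide) ![1,-1,1] (fun i => by fin_cases i <;> norm_num) ?_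
      intro i j; fin_cases i <;> fin_cases j <;> simp [Fin.ext_iff, Matrix.vecHead, Matrix.vecTail]
    · simp [Matrix.trace_fin_three, Matrix.vecHead, Matrix.vecTail]
    · rw [Matrix.mulVec_single]
      funext i; fin_cases i <;> simp [Pi.single_apply, Matrix.vecHead, Matrix.vecTail]
  · refine ⟨⟨!![0,0,1;0,1,0;-1,0,0], ?_⟩, ?_, ?_, ?_⟩
    · rw [Matrix.mem_specialOrthogonalGroup_iff]
      constructor
      · rw [Matrix.mem_orthogonalGroup_iff]
        ext i j
        fin_cases i <;> fin_cases j <;>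
          simp [Matrix.mul_apply, Fin.sum_univ_succ, Matrix.star_eq_conjTranspose,
            Matrix.conjTranspose_apply, Matrix.vecHead, Matrix.vecTail]
      · simp [Matrix.det_fin_three]
    · refine isSignedPerm_of_repr ![2,1,0] (by decide) ![1,1,-1] (fun i => by fin_cases i <;> norm_num) ?_
      intro i j; fin_cases i <;> fin_cases j <;> simp [Fin.ext_iff, Matrix.vecHead, Matrix.vecTail]
    · simp [Matrix.trace_fin_three, Matrix.vecHead, Matrix.vecTail]
    · rw [Matrix.mulVec_single]
      funext i; fin_cases i <;> simp [Pi.single_apply, Matrix.vecHead, Matrix.vecTail]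
  · refine ⟨⟨!![0,-1,0;1,0,0;0,0,1], ?_⟩, ?_, ?_, ?_⟩
    · rw [Matrix.mem_specialOrthogonalGroup_iff]
      constructor
      · rw [Matrix.mem_orthogonalGroup_iff]
        ext i j
        fin_cases i <;> fin_cases j <;>
          simp [Matrix.mul_apply, Fin.sum_univ_succ, Matrix.star_eq_conjTranspose,
            Matrix.conjTranspose_apply, Matrix.vecHead, Matrix.vecTail]
      · simp [Matrix.det_fin_three]
    · refine isSignedPerm_of_repr ![1,0,2] (by decide) ![-1,1,1] (fun i => by fin_cases i <;> norm_num) ?_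
      intro i j; fin_cases i <;> fin_cases j <;> simp [Fin.ext_iff, Matrix.vecHead, Matrix.vecTail]
    · simp [Matrix.trace_fin_three, Matrix.vecHead, Matrix.vecTail]
    · rw [Matrix.mulVec_single]
      funext i; fin_cases i <;> simp [Pi.single_apply, Matrix.vecHead, Matrix.vecTail]

open Matrix in
/-- The subgroup `Σ̂₄` of `SO(3)` of all signed permutation matrices of determinant 1
(the rotation group of the cube) equals its own normaliser in `SO(3)`. -/
theorem SigmaHat4_self_normalizing : Subgroup.normalizer (SigmaHat4 : Set SO3) = SigmaHat4 := by
  refine le_antisymm ?_ Subgroup.le_normalizer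
  intro g hg
  rw [Subgroup.mem_normalizer_iff] at hg
  have hginv : (g⁻¹).1 * g.1 = 1 := congrArg Subtype.val (inv_mul_cancel g)
  have key : ∀ c : Fin 3, ∃ k : Fin 3, ∀ j, j ≠ k → g.1 j c = 0 := by
    intro c
    obtain ⟨Q, hQsp, hQtr, hQfix⟩ := exists_Q c
    have hQmem : Q ∈ SigmaHat4 := hQsp
    have hh : g * Q * g⁻¹ ∈ SigmaHat4 := (hg Q).mp hQmem
    have hmat : (g * Q * g⁻¹).1 = g.1 * Q.1 * (g⁻¹).1 := rfl
    have htr : (g * Q * g⁻¹).1.trace = 1 := by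
      rw [hmat, Matrix.trace_mul_comm, ← Matrix.mul_assoc, hginv, Matrix.one_mul, hQtr]
    have hdet : (g * Q * g⁻¹).1.det = 1 := (g * Q * g⁻¹).2.2
    have hfix : (g * Q * g⁻¹).1 *ᵥ (g.1 *ᵥ Pi.single c 1) = g.1 *ᵥ Pi.single c 1 := by
      rw [hmat, Matrix.mulVec_mulVec, Matrix.mul_assoc, hginv, Matrix.mul_one,
        ← Matrix.mulVec_mulVec, hQfix]
    obtain ⟨k, hk⟩ := fixed_axis hh hdet htr hfix
    refine ⟨k, fun j hj => ?_⟩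
    have h0 := hk j hj
    rw [Matrix.mulVec_single] at h0
    simpa using h0
  choose k hk using key
  have ho : star g.1 * g.1 = 1 := g.2.1.1
  have horth : ∀ a b : Fin 3, (∑ i, g.1 i a * g.1 i b) = (1 : Matrix (Fin 3) (Fin 3) ℝ) a b := by
    intro a b
    rw [← ho]
    simp [Matrix.mul_apply, Matrix.star_apply, mul_comm]
  have hcol : ∀ a b : Fin 3, (∑ i, g.1 i a * g.1 i b) = g.1 (k a) a * g.1 (k a) b := by
    intro a b
    refine Finset.sum_eq_single (k a) (fun i _ hi => by rw [hk a i hi, zero_mul]) (by simp)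
  have hsq : ∀ c, g.1 (k c) c * g.1 (k c) c = 1 := by
    intro c
    rw [← hcol c c, horth c c, Matrix.one_apply_eq]
  have hne0 : ∀ c, g.1 (k c) c ≠ 0 := by
    intro c h0
    have := hsq c
    rw [h0, mul_zero] at this
    norm_num at this
  have hkinj : Function.Injective k := by
    intro a b hab
    by_contra hne
    have h0 : g.1 (k a) a * g.1 (k a) b = 0 := by
      rw [← hcol a b, horth a b, Matrix.one_apply_ne hne]
    rcases mul_eq_zero.mp h0 with h | h
    · exact hne0 a h
    · rw [hab] at h
      exact hne0 b h
  let K : Fin 3 ≃ Fin 3 := Equiv.ofBijective k (Finite.injective_iff_bijective.mp hkinj)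
  have hKk : ∀ j : Fin 3, k (K.symm j) = j := fun j => K.apply_symm_apply j
  show IsSignedPerm g.1
  refine isSignedPerm_of_repr (fun i => K.symm i) K.symm.injective
    (fun i => g.1 i (K.symm i)) (fun i => ?_) (fun i j => ?_)
  · have := hsq (K.symm i)
    rw [hKk i] at this
    exact mul_self_eq_one_iff.mp this
  · split
    · next h => rw [h]
    · next h =>
      refine hk j i fun hik => h ?_
      rw [hik]
      exact (K.symm_apply_apply j).symm
end
end
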